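/- arXiv:1806.08029 — 2 statements merged into one kernel-verified Lean document; each statement's English description precedes it below -/
import Mathlib

section
/- Let p be a prime, m ≥ 2, and let u_i (for i in a finite nonempty index set I ⊆ {0,1,…,m−1} with |I| ≥ 2) be elements of an abelian group, each of order exactly p^m. Set r = min I and s = min(I \ {r}). If ∏_{i ∈ I} u_i^{p^i} = 1, then raising to the power p^{m−s} gives u_r^{p^{m−s+r}} = 1, contradicting that u_r has order p^m. Hence ∏_{i ∈ I} u_i^{p^i} ≠ 1. -/
theorem stmt_5 (p m : ℕ) (hp : p.Prime) (hm : 2 ≤ m)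
    (M : Type*) [CommGroup M] (I : Finset ℕ) (hI : ↑I ⊆ Finset.range m)
    (hcard : 2 ≤ I.card) (u : ℕ → M) (hord : ∀ i ∈ I, orderOf (u i) = p ^ m) :
    ∏ i ∈ I, (u i) ^ p ^ i ≠ 1 := by
  intro h
  have hne : I.Nonempty := Finset.card_pos.mp (by omega)
  set r := I.min' hne with hrdef
  have hr : r ∈ I := I.min'_mem hne
  have hJne : (I.erase r).Nonempty := by
    rw [← Finset.card_pos, Finset.card_erase_of_mem hr]; omega
  set s := (I.erase r).min' hJne with hsdef
  have hs : s ∈ I.erase r := (I.erase r).min'_mem hJne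
  have hsI : s ∈ I := Finset.mem_of_mem_erase hs
  have hrs : r < s :=
    lt_of_le_of_ne (I.min'_le s hsI) (Ne.symm (Finset.ne_of_mem_erase hs))
  have hsm : s < m := by
    have := hI hsI
    simpa [Finset.mem_range] using this
  have h2 := congrArg (· ^ p ^ (m - s)) h
  simp only [one_pow] at h2
  rw [← Finset.prod_pow] at h2
  have key : ∀ i ∈ I, i ≠ r → (u i ^ p ^ i) ^ p ^ (m - s) = 1 := by
    intro i hi hir
    have hsi : s ≤ i := (I.erase r).min'_le i (Finset.mem_erase.mpr ⟨hir, hi⟩)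
    rw [← pow_mul, ← pow_add]
    rw [← orderOf_dvd_iff_pow_eq_one, hord i hi]
    exact pow_dvd_pow p (by omega)
  rw [Finset.prod_eq_single_of_mem r hr key] at h2
  rw [← pow_mul, ← pow_add, ← orderOf_dvd_iff_pow_eq_one, hord r hr,
    Nat.pow_dvd_pow_iff_le_right hp.one_lt] at h2
  omega
end

section
/- Let p be a prime, F a field of characteristic p, A a finite abelian p-group of exponent p^m, and G a finite group acting on A. Fix u ∈ A of order p^m, let 𝒪 be the orbit of u under G, and suppose p does not divide |𝒪|. Let a = |𝒪|·1 − ∑_{v ∈ 𝒪} v in the group algebra F[A]. Then with t = 1 + p + ⋯ + p^{m−1}, a^t ≠ 0 and a lies in the Jacobson radical of F[A]; consequently the Loewy length of the fixed-point subalgebra F[A]^G is at least (p^m + p − 2)/(p − 1). -/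
/-!
Put `r = |𝒪|`, so `a = r • 1 - ∑ v ∈ 𝒪, v` with every `v` of order `p ^ m`. Each `1 - v` is
nilpotent in characteristic `p`, hence so is `a`; it lies in the Jacobson radical of `F[A]` and,
being `G`-invariant, in that of `F[A]^G`, so the Loewy length of `F[A]^G` exceeds `t` as soon as
`a ^ t ≠ 0`.

For `a ^ t ≠ 0` induct on `m`, allowing any `r ≠ 0`. By Frobenius `a ^ p = r ^ p • 1 - ∑ v ^ p`
has the same shape with orders `p ^ (m - 1)`, and `a ^ t = (a ^ p) ^ t₀ * a` for `t = p * t₀ + 1`.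
Here `(a ^ p) ^ t₀ ≠ 0` is supported on `B = {x | x ^ p ^ (m - 1) = 1}` while no `v` lies in
`B`, so at a point of `B` the coefficient of `(a ^ p) ^ t₀ * a` is `r` times that of `(a ^ p) ^ t₀`.
-/

open MonoidAlgebra Finset

section

variable {k G ι : Type*}

instance MonoidAlgebra.charP [CommRing k] [Monoid G] (p : ℕ) [CharP k p] : CharP k[G] p :=
  charP_of_injective_algebraMap' k p

section Frobenius

variable [CommRing k] [CommMonoid G] (p : ℕ) [Fact p.Prime] [CharP k p]

theorem smul_one_sub_sum_of_pow_char (r : k) (s : Finset ι) (g : ι → G) :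
    (r • (1 : k[G]) - ∑ i ∈ s, of k G (g i)) ^ p = r ^ p • 1 - ∑ i ∈ s, of k G (g i ^ p) := by
  simp only [sub_pow_char, smul_pow, one_pow, sum_pow_char, map_pow]

theorem isNilpotent_card_smul_one_sub_sum (n : ℕ) {s : Finset ι} {g : ι → G}
    (hg : ∀ i ∈ s, g i ^ p ^ n = 1) :
    IsNilpotent ((#s : k) • (1 : k[G]) - ∑ i ∈ s, of k G (g i)) := by
  rw [Nat.cast_smul_eq_nsmul, ← sum_const, ← sum_sub_distrib]
  refine isNilpotent_sum fun i hi => ⟨p ^ n, ?_⟩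
  rw [sub_pow_char_pow, one_pow, ← map_pow, hg i hi, map_one, sub_self]

end Frobenius

theorem smul_one_sub_sum_mem_range_mapDomainAlgHom [CommRing k] [Monoid G] {B : Submonoid G}
    (r : k) {s : Finset ι} {g : ι → G} (hg : ∀ i ∈ s, g i ∈ B) :
    r • 1 - ∑ i ∈ s, of k G (g i) ∈ (mapDomainAlgHom k k B.subtype).range :=
  sub_mem (Subalgebra.smul_mem _ (one_mem _) r) <|
    sum_mem fun i hi => ⟨of k B ⟨g i, hg i hi⟩, by simp⟩

theorem mul_smul_one_sub_sum_ne_zero [CommRing k] [NoZeroDivisors k] [Group G]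
    {B : Subgroup G} {c : k[G]} (hc : c ∈ (mapDomainAlgHom k k B.subtype).range) (hc0 : c ≠ 0)
    {r : k} (hr : r ≠ 0) {s : Finset ι} {g : ι → G} (hg : ∀ i ∈ s, g i ∉ B) :
    c * (r • 1 - ∑ i ∈ s, of k G (g i)) ≠ 0 := by
  obtain ⟨b, hb⟩ := hc
  replace hb : mapDomainAlgHom k k B.subtype b = c := hb
  subst hb
  obtain ⟨w, hw⟩ : ∃ w, b.coeff w ≠ 0 := by
    by_contra! h
    exact hc0 (by simp [show b = 0 from MonoidAlgebra.ext (Finsupp.ext h)])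
  have hin : (mapDomainAlgHom k k B.subtype b).coeff w = b.coeff w :=
    Finsupp.mapDomain_apply Subtype.val_injective b.coeff w
  have hout : ∀ i ∈ s, (mapDomainAlgHom k k B.subtype b).coeff (w * (g i)⁻¹) = 0 := by
    intro i hi
    refine Finsupp.mapDomain_of_notMem_range _ _ ?_
    rintro ⟨x, hx⟩
    have hgi : g i = (B.subtype x)⁻¹ * w := by rw [hx]; group
    exact hg i hi (hgi ▸ B.mul_mem (B.inv_mem x.2) w.2)
  have hcoeff : (mapDomainAlgHom k k B.subtype b * (r • 1 - ∑ i ∈ s, of k G (g i))).coeff w =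
      r * b.coeff w := by
    simp only [mul_sub, mul_smul_comm, mul_one, mul_sum, coeff_sub, coeff_sum, of_apply,
      Finsupp.sub_apply, coeff_smul_apply, Finsupp.finsetSum_apply, coeff_mul_single_apply]
    rw [sum_eq_zero fun i hi => by rw [hout i hi], hin, smul_eq_mul, sub_zero]
  intro h
  rw [h, coeff_zero, Finsupp.coe_zero, Pi.zero_apply] at hcoeff
  exact mul_ne_zero hr hw hcoeff.symm

theorem smul_one_sub_sum_pow_geomSum_ne_zero [CommRing k] [IsDomain k] (p : ℕ) [Fact p.Prime]
    [CharP k p] [CommGroup G] {r : k} (hr : r ≠ 0) (n : ℕ) {s : Finset ι} {g : ι → G}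
    (hg : ∀ i ∈ s, orderOf (g i) = p ^ n) :
    (r • (1 : k[G]) - ∑ i ∈ s, of k G (g i)) ^ (∑ j ∈ range n, p ^ j) ≠ 0 := by
  induction n generalizing r g with
  | zero => simp
  | succ n ih =>
    have hp : p.Prime := Fact.out
    let B := (powMonoidHom (p ^ n) : G →* G).ker
    have hpow_mem : ∀ i ∈ s, g i ^ p ∈ B := fun i hi => by
      rw [MonoidHom.mem_ker, powMonoidHom_apply, ← pow_mul, ← pow_succ', ← hg i hi,
        pow_orderOf_eq_one]
    have hnot_mem : ∀ i ∈ s, g i ∉ B := fun i hi =>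
      pow_ne_one_of_lt_orderOf (pow_pos hp.pos n).ne' (hg i hi ▸ Nat.pow_lt_pow_succ hp.one_lt)
    have hpow_order : ∀ i ∈ s, orderOf (g i ^ p) = p ^ n := fun i hi => by
      rw [orderOf_pow_of_dvd hp.ne_zero (hg i hi ▸ dvd_pow_self p n.succ_ne_zero), hg i hi,
        pow_succ, Nat.mul_div_cancel _ hp.pos]
    rw [geom_sum_succ, pow_succ, pow_mul, smul_one_sub_sum_of_pow_char p]
    exact mul_smul_one_sub_sum_ne_zero
      (Subalgebra.pow_mem _ (smul_one_sub_sum_mem_range_mapDomainAlgHom _ hpow_mem) _)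
      (ih (pow_ne_zero p hr) hpow_order) hr hnot_mem

theorem orderOf_smul_eq {M : Type*} [Group G] [Monoid M] [MulDistribMulAction G M]
    (g : G) (x : M) : orderOf (g • x) = orderOf x :=
  MulDistribMulAction.toMulEquiv_apply M g x ▸ MulEquiv.orderOf_eq _ x

theorem sum_smul_eq_of_coe_eq_orbit {α β : Type*} [Group G] [MulAction G α] [AddCommMonoid β]
    {O : Finset α} {u : α} (hO : (O : Set α) = MulAction.orbit G u) (g : G) (f : α → β) :
    ∑ v ∈ O, f (g • v) = ∑ v ∈ O, f v :=
  sum_equiv (MulAction.toPerm g) (fun v => by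
    simp only [← mem_coe, hO, MulAction.toPerm_apply]
    rw [← MulAction.smul_orbit g u, Set.smul_mem_smul_set_iff, MulAction.smul_orbit]) fun _ _ => rfl

theorem mapDomainAlgHom_smul_one_sub_sum_orbit [CommRing k] [Group G] {A : Type*} [Monoid A]
    [MulDistribMulAction G A] {O : Finset A} {u : A} (hO : (O : Set A) = MulAction.orbit G u)
    (r : k) (g : G) :
    mapDomainAlgHom k k (MulDistribMulAction.toMonoidHom A g) (r • 1 - ∑ v ∈ O, of k A v) =
      r • 1 - ∑ v ∈ O, of k A v := by
  simp only [map_sub, map_smul, map_one, map_sum, mapDomainAlgHom_apply, of_apply,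
    mapDomain_single, MulDistribMulAction.toMonoidHom_apply]
  rw [sum_smul_eq_of_coe_eq_orbit hO g (fun v => single v 1)]

theorem IsNilpotent.mem_jacobson_bot {R : Type*} [CommRing R] {x : R} (hx : IsNilpotent x) :
    x ∈ (⊥ : Ideal R).jacobson := by
  rw [Ideal.jacobson_bot]
  exact nilradical_le_jacobson R (mem_nilradical.mpr hx)

theorem lt_of_jacobson_bot_pow_eq_bot {R : Type*} [CommRing R] {x : R} (hx : IsNilpotent x)
    {t : ℕ} (ht : x ^ t ≠ 0) {n : ℕ} (hn : (⊥ : Ideal R).jacobson ^ n = ⊥) : t < n := by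
  by_contra! hle
  have hxn : x ^ n ∈ (⊥ : Ideal R) := hn ▸ Ideal.pow_mem_pow hx.mem_jacobson_bot n
  exact ht (pow_eq_zero_of_le hle ((Submodule.mem_bot _).mp hxn))

theorem Nat.pow_add_sub_two_div_sub_one {p : ℕ} (hp : 2 ≤ p) (m : ℕ) :
    (p ^ m + p - 2) / (p - 1) = ∑ i ∈ range m, p ^ i + 1 := by
  have : p ^ m + p - 2 = (p ^ m - 1) + (p - 1) := by
    have := Nat.one_le_pow m p (by omega)
    omega
  rw [this, Nat.add_div_right _ (by omega), Nat.geomSum_eq hp]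

end

theorem stmt_6_general (p m : ℕ) [Fact p.Prime] (F : Type*) [Field F] [CharP F p]
    (A : Type*) [CommGroup A]
    (G : Type*) [Group G] [MulDistribMulAction G A]
    (u : A) (hu : orderOf u = p ^ m)
    (O : Finset A) (hO : ↑O = MulAction.orbit G u)
    (horb : ¬ p ∣ O.card)
    (a : MonoidAlgebra F A)
    (ha : a = (O.card : F) • (1 : MonoidAlgebra F A) - ∑ v ∈ O, MonoidAlgebra.of F A v)
    (t : ℕ) (ht : t = ∑ i ∈ Finset.range m, p ^ i)
    (S : Subalgebra F (MonoidAlgebra F A))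
    (hS : S = ⨅ g : G, AlgHom.equalizer
        (MonoidAlgebra.mapDomainAlgHom F F (MulDistribMulAction.toMonoidHom A g))
        (AlgHom.id F (MonoidAlgebra F A))) :
    a ^ t ≠ 0 ∧ a ∈ Ideal.jacobson (⊥ : Ideal (MonoidAlgebra F A)) ∧
    ∀ t' : ℕ, (Ideal.jacobson (⊥ : Ideal S)) ^ t' = ⊥ →
      (p ^ m + p - 2) / (p - 1) ≤ t' := by
  have horder : ∀ v ∈ O, orderOf v = p ^ m := fun v hv => by
    obtain ⟨g, rfl⟩ : v ∈ MulAction.orbit G u := hO ▸ hv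
    rw [orderOf_smul_eq, hu]
  have hcard : (O.card : F) ≠ 0 := (CharP.cast_eq_zero_iff F p _).not.mpr horb
  have hat : a ^ t ≠ 0 := ha ▸ ht ▸ smul_one_sub_sum_pow_geomSum_ne_zero p hcard m horder
  have hnil : IsNilpotent a :=
    ha ▸ isNilpotent_card_smul_one_sub_sum p m fun v hv => horder v hv ▸ pow_orderOf_eq_one v
  have haS : a ∈ S := by
    rw [hS, Algebra.mem_iInf]
    exact fun g => ha ▸ mapDomainAlgHom_smul_one_sub_sum_orbit hO _ g
  refine ⟨hat, hnil.mem_jacobson_bot, fun t' ht' => ?_⟩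
  have hlt : t < t' := lt_of_jacobson_bot_pow_eq_bot (x := (⟨a, haS⟩ : S))
    ((IsNilpotent.map_iff (f := S.val) Subtype.val_injective).mp hnil)
    (fun h => hat congr(Subtype.val $h)) ht'
  rw [Nat.pow_add_sub_two_div_sub_one (Fact.out : p.Prime).two_le, ← ht]
  exact hlt

/-- Theorem 4 of the paper: if `A` is a finite abelian `p`-group of exponent `p^m`, `G` acts
on `A`, `u ∈ A` has order `p^m` and its orbit `𝒪` has size prime to `p`, then
`a = |𝒪|·1 - ∑_{v ∈ 𝒪} v` lies in the Jacobson radical of `F[A]`, satisfies `a^t ≠ 0` for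
`t = 1 + p + ⋯ + p^{m-1}`, and hence the Loewy length of `F[A]^G` is at least
`(p^m + p - 2)/(p - 1)`. -/
theorem stmt_6 (p m : ℕ) [Fact p.Prime] (hm : 1 ≤ m) (F : Type*) [Field F] [CharP F p]
    (A : Type*) [CommGroup A] [Fintype A] (hexp : Monoid.exponent A = p ^ m)
    (G : Type*) [Group G] [Finite G] [MulDistribMulAction G A]
    (u : A) (hu : orderOf u = p ^ m)
    (O : Finset A) (hO : ↑O = MulAction.orbit G u)
    (horb : ¬ p ∣ O.card)
    (a : MonoidAlgebra F A)
    (ha : a = (O.card : F) • (1 : MonoidAlgebra F A) - ∑ v ∈ O, MonoidAlgebra.of F A v)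
    (t : ℕ) (ht : t = ∑ i ∈ Finset.range m, p ^ i)
    (S : Subalgebra F (MonoidAlgebra F A))
    (hS : S = ⨅ g : G, AlgHom.equalizer
        (MonoidAlgebra.mapDomainAlgHom F F (MulDistribMulAction.toMonoidHom A g))
        (AlgHom.id F (MonoidAlgebra F A))) :
    a ^ t ≠ 0 ∧ a ∈ Ideal.jacobson (⊥ : Ideal (MonoidAlgebra F A)) ∧
    ∀ t' : ℕ, (Ideal.jacobson (⊥ : Ideal S)) ^ t' = ⊥ →
      (p ^ m + p - 2) / (p - 1) ≤ t' :=
  stmt_6_general p m F A G u hu O hO horb a ha t ht S hS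
end
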